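/- Let AF = ⟨𝒜, ⇀⟩ be an argumentation framework, let agents 1,…,n have most preferred labelings ℒ₁,…,ℒₙ, let 𝒮 be the set of all admissible labelings that are compatible (≈) with every ℒᵢ, and let ℒ ∈ 𝒮. Suppose ℒ is Pareto optimal in 𝒮 when every agent i has the Hamming set based preference ⪰_{i,⊖}, and also Pareto optimal in 𝒮 when every agent i has the IUO Hamming sets based preference ⪰_{i,⊖ᴹ}. Then for every assignment c giving each agent i either the preference ⪰_{i,⊖} or the preference ⪰_{i,⊖ᴹ}, the labeling ℒ is Pareto optimal in 𝒮 with respect to the (possibly heterogeneous) preference profile (⪰_{i,c(i)}). -/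
import Mathlib


/- Labels for arguments: in, out, undec -/
inductive Lab where
  | IN : Lab
  | OUT : Lab
  | UNDEC : Lab
deriving DecidableEq

variable {A : Type}

/-- Arguments labeled `in` by a labeling. -/
def labIn (L : A → Lab) : Set A := {a | L a = Lab.IN}
/-- Arguments labeled `out` by a labeling. -/
def labOut (L : A → Lab) : Set A := {a | L a = Lab.OUT}
/-- Arguments labeled `undec` by a labeling. -/
def labUndec (L : A → Lab) : Set A := {a | L a = Lab.UNDEC}
/-- Decided arguments: labeled `in` or `out`. -/
def labDec (L : A → Lab) : Set A := labIn L ∪ labOut L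

/-- Admissible labeling with respect to a defeat relation `df` (`df b a` : b defeats a). -/
def Admissible (df : A → A → Prop) (L : A → Lab) : Prop :=
  ∀ a : A,
    (L a = Lab.IN → ∀ b : A, df b a → L b = Lab.OUT) ∧
    (L a = Lab.OUT → ∃ b : A, df b a ∧ L b = Lab.IN)

/-- Complete labeling. -/
def Complete (df : A → A → Prop) (L : A → Lab) : Prop :=
  Admissible df L ∧
  ∀ a : A, L a = Lab.UNDEC →
    ¬ (∀ b : A, df b a → L b = Lab.OUT) ∧ ¬ (∃ b : A, df b a ∧ L b = Lab.IN)

/-- `L1 ⊑ L2` : less or equally committed. -/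
def LabLeq (L1 L2 : A → Lab) : Prop := labIn L1 ⊆ labIn L2 ∧ labOut L1 ⊆ labOut L2

/-- `L1 ≈ L2` : compatible labelings. -/
def LabCompatible (L1 L2 : A → Lab) : Prop :=
  labIn L1 ∩ labOut L2 = ∅ ∧ labOut L1 ∩ labIn L2 = ∅

/-- Hamming set `L1 ⊖ L2`. -/
def hamSet (L1 L2 : A → Lab) : Set A := {a | L1 a ≠ L2 a}
/-- Hamming distance `L1 |⊖| L2`. -/
noncomputable def hamDist (L1 L2 : A → Lab) : ℕ := (hamSet L1 L2).ncard

/-- in–out Hamming set `L1 ⊖ⁱᵒ L2`. -/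
def ioSet (L1 L2 : A → Lab) : Set A :=
  {a | (L1 a = Lab.IN ∧ L2 a = Lab.OUT) ∨ (L1 a = Lab.OUT ∧ L2 a = Lab.IN)}
/-- dec–undec Hamming set `L1 ⊖ᵈᵘ L2`. -/
def duSet (L1 L2 : A → Lab) : Set A :=
  {a | (a ∈ labDec L1 ∧ L2 a = Lab.UNDEC) ∨ (L1 a = Lab.UNDEC ∧ a ∈ labDec L2)}
/-- IUO Hamming sets `L1 ⊖ᴹ L2` as a pair. -/
def iuoSets (L1 L2 : A → Lab) : Set A × Set A := (ioSet L1 L2, duSet L1 L2)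
/-- Componentwise inclusion on pairs of sets. -/
def PairSub {α : Type} (p q : Set α × Set α) : Prop := p.1 ⊆ q.1 ∧ p.2 ⊆ q.2
/-- IUO Hamming distance `L1 |⊖ᴹ| L2`. -/
noncomputable def iuoDist (L1 L2 : A → Lab) : ℕ :=
  2 * (ioSet L1 L2).ncard + (duSet L1 L2).ncard

/-- Two arguments are in-sync (with respect to the complete labelings of the framework). -/
def InSync (df : A → A → Prop) (a b : A) : Prop :=
  (∀ L : A → Lab, Complete df L → L a = L b) ∨
  (∀ L : A → Lab, Complete df L →
    (L a = Lab.IN ↔ L b = Lab.OUT) ∧ (L a = Lab.OUT ↔ L b = Lab.IN))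

/-- An issue: an equivalence class of the in-sync relation. -/
def IsIssue (df : A → A → Prop) (B : Set A) : Prop :=
  ∃ a : A, B = {b | InSync df a b}

/-- Issue-wise set `L1 ⊖_W L2`. -/
def iwSet (df : A → A → Prop) (L1 L2 : A → Lab) : Set (Set A) :=
  {B | IsIssue df B ∧ ∃ a ∈ B, L1 a ≠ L2 a}
/-- Issue-wise distance `L1 |⊖_W| L2`. -/
noncomputable def iwDist (df : A → A → Prop) (L1 L2 : A → Lab) : ℕ := (iwSet df L1 L2).ncard

/-- in–out Issue-wise set `L1 ⊖_Wⁱᵒ L2`. -/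
def iwIoSet (df : A → A → Prop) (L1 L2 : A → Lab) : Set (Set A) :=
  {B | IsIssue df B ∧ ∃ a ∈ B, a ∈ ioSet L1 L2}
/-- dec–undec Issue-wise set `L1 ⊖_Wᵈᵘ L2`. -/
def iwDuSet (df : A → A → Prop) (L1 L2 : A → Lab) : Set (Set A) :=
  {B | IsIssue df B ∧ ∃ a ∈ B, a ∈ duSet L1 L2}
/-- IUO Issue-wise sets `L1 ⊖_Wᴹ L2` as a pair. -/
def iwIuoSets (df : A → A → Prop) (L1 L2 : A → Lab) : Set (Set A) × Set (Set A) :=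
  (iwIoSet df L1 L2, iwDuSet df L1 L2)
/-- IUO Issue-wise distance `L1 |⊖_Wᴹ| L2`. -/
noncomputable def iwIuoDist (df : A → A → Prop) (L1 L2 : A → Lab) : ℕ :=
  2 * (iwIoSet df L1 L2).ncard + (iwDuSet df L1 L2).ncard

/- Preferences: `pref Li L L'` means `L ⪰ L'` for an agent whose most preferred labeling is `Li`. -/
/-- Hamming set based preference `⪰_{i,⊖}`. -/
def hamSetPref (Li L L' : A → Lab) : Prop := hamSet L Li ⊆ hamSet L' Li
/-- Hamming distance based preference `⪰_{i,|⊖|}`. -/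
def hamDistPref (Li L L' : A → Lab) : Prop := hamDist L Li ≤ hamDist L' Li
/-- IUO Hamming sets based preference `⪰_{i,⊖ᴹ}`. -/
def iuoSetPref (Li L L' : A → Lab) : Prop := PairSub (iuoSets L Li) (iuoSets L' Li)
/-- IUO Hamming distance based preference `⪰_{i,|⊖ᴹ|}`. -/
def iuoDistPref (Li L L' : A → Lab) : Prop := iuoDist L Li ≤ iuoDist L' Li
/-- Issue-wise set based preference `⪰_{i,⊖_W}`. -/
def iwSetPref (df : A → A → Prop) (Li L L' : A → Lab) : Prop := iwSet df L Li ⊆ iwSet df L' Li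
/-- Issue-wise distance based preference `⪰_{i,|⊖_W|}`. -/
def iwDistPref (df : A → A → Prop) (Li L L' : A → Lab) : Prop := iwDist df L Li ≤ iwDist df L' Li
/-- IUO Issue-wise sets based preference `⪰_{i,⊖_Wᴹ}`. -/
def iwIuoSetPref (df : A → A → Prop) (Li L L' : A → Lab) : Prop :=
  PairSub (iwIuoSets df L Li) (iwIuoSets df L' Li)
/-- IUO Issue-wise distance based preference `⪰_{i,|⊖_Wᴹ|}`. -/
def iwIuoDistPref (df : A → A → Prop) (Li L L' : A → Lab) : Prop :=
  iwIuoDist df L Li ≤ iwIuoDist df L' Li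

/-- Strict part of a preference relation. -/
def StrictPref (pref : (A → Lab) → (A → Lab) → Prop) (L L' : A → Lab) : Prop :=
  pref L L' ∧ ¬ pref L' L

/-- `L'` Pareto dominates `L` with respect to the profile of preference relations `pref`. -/
def Dominates {ι : Type} (pref : ι → (A → Lab) → (A → Lab) → Prop) (L' L : A → Lab) : Prop :=
  (∀ i : ι, pref i L' L) ∧ ∃ j : ι, StrictPref (pref j) L' L

/-- `L` is Pareto optimal in `S`: no element of `S` Pareto dominates `L`. -/
def ParetoOptimalIn {ι : Type} (pref : ι → (A → Lab) → (A → Lab) → Prop)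
    (S : Set (A → Lab)) (L : A → Lab) : Prop :=
  ∀ L' ∈ S, ¬ Dominates pref L' L

/-- `LSO` is the skeptical outcome of profile `P`: the greatest admissible labeling below the
profile. -/
def IsSkeptical {n : ℕ} (df : A → A → Prop) (P : Fin n → (A → Lab)) (LSO : A → Lab) : Prop :=
  Admissible df LSO ∧ (∀ i : Fin n, LabLeq LSO (P i)) ∧
  ∀ L : A → Lab, Admissible df L → (∀ i : Fin n, LabLeq L (P i)) → LabLeq L LSO

/-- `LC` is the credulous initial outcome of the profile `P`. -/
def IsCio {n : ℕ} (P : Fin n → (A → Lab)) (LC : A → Lab) : Prop :=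
  ∀ a : A,
    (LC a = Lab.IN ↔ (∃ i : Fin n, P i a = Lab.IN) ∧ ∀ j : Fin n, P j a ≠ Lab.OUT) ∧
    (LC a = Lab.OUT ↔ (∃ i : Fin n, P i a = Lab.OUT) ∧ ∀ j : Fin n, P j a ≠ Lab.IN)

/-- `LCO` is the credulous outcome of `P`: the greatest admissible labeling `⊑ cio(P)`. -/
def IsCredulous {n : ℕ} (df : A → A → Prop) (P : Fin n → (A → Lab)) (LCO : A → Lab) : Prop :=
  ∃ LCIO : A → Lab, IsCio P LCIO ∧ Admissible df LCO ∧ LabLeq LCO LCIO ∧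
    ∀ L : A → Lab, Admissible df L → LabLeq L LCIO → LabLeq L LCO

/-- `LSCO` is the super credulous outcome of `P` given credulous outcome `LCO`:
the least complete labeling above `LCO`. -/
def IsSuperCredulousOf (df : A → A → Prop) (LCO LSCO : A → Lab) : Prop :=
  Complete df LSCO ∧ LabLeq LCO LSCO ∧
    ∀ L : A → Lab, Complete df L → LabLeq LCO L → LabLeq LSCO L

lemma compat_ioSet_empty {L Li : A → Lab} (h : LabCompatible L Li) : ioSet L Li = ∅ := by
  ext a
  simp only [ioSet, Set.mem_setOf_eq, Set.mem_empty_iff_false, iff_false]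
  rintro (⟨h1, h2⟩ | ⟨h1, h2⟩)
  · exact absurd (Set.mem_inter h1 h2 : a ∈ labIn L ∩ labOut Li) (by rw [h.1]; simp)
  · exact absurd (Set.mem_inter h1 h2 : a ∈ labOut L ∩ labIn Li) (by rw [h.2]; simp)

lemma compat_hamSet_eq_duSet {L Li : A → Lab} (h : LabCompatible L Li) :
    hamSet L Li = duSet L Li := by
  ext a
  simp only [hamSet, duSet, labDec, labIn, labOut, Set.mem_setOf_eq, Set.mem_union]
  have hio := compat_ioSet_empty h
  have hioa : a ∉ ioSet L Li := by rw [hio]; simp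
  simp only [ioSet, Set.mem_setOf_eq] at hioa
  push_neg at hioa
  constructor
  · intro hne
    cases hLa : L a <;> cases hLia : Li a <;> simp_all
  · rintro (⟨(h1 | h1), h2⟩ | ⟨h1, (h2 | h2)⟩) <;> simp_all

lemma compat_pref_iff {L L' Li : A → Lab} (h : LabCompatible L Li)
    (h' : LabCompatible L' Li) :
    hamSetPref Li L' L ↔ iuoSetPref Li L' L := by
  unfold hamSetPref iuoSetPref PairSub iuoSets
  rw [compat_hamSet_eq_duSet h, compat_hamSet_eq_duSet h',
    compat_ioSet_empty h, compat_ioSet_empty h']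
  simp

/-- Pareto optimality in the set of admissible labelings compatible with every
agent's labeling carries over from homogeneous Hamming set / IUO Hamming sets based preferences
to any heterogeneous assignment of these two preference classes. -/
theorem paretoOptimal_heterogeneous_ham_iuoHam {A : Type} [Fintype A] {n : ℕ}
    (df : A → A → Prop) (Ls : Fin n → (A → Lab))
    (S : Set (A → Lab))
    (hS : S = {L : A → Lab | Admissible df L ∧ ∀ i : Fin n, LabCompatible L (Ls i)})
    (L : A → Lab) (hL : L ∈ S)
    (h1 : ParetoOptimalIn (fun i : Fin n => hamSetPref (Ls i)) S L)
    (h2 : ParetoOptimalIn (fun i : Fin n => iuoSetPref (Ls i)) S L)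
    (c : Fin n → Bool) :
    ParetoOptimalIn (fun i : Fin n => if c i then hamSetPref (Ls i) else iuoSetPref (Ls i))
      S L := by
  intro L' hL' hdom
  apply h1 L' hL'
  subst hS
  have hLc := hL.2
  have hL'c := hL'.2
  have key : ∀ i : Fin n,
      (if c i then hamSetPref (Ls i) else iuoSetPref (Ls i)) = hamSetPref (Ls i) ∨
      (if c i then hamSetPref (Ls i) else iuoSetPref (Ls i)) = iuoSetPref (Ls i) := by
    intro i; by_cases hc : c i <;> simp [hc]
  have iff_i : ∀ (i : Fin n) (M M' : A → Lab), M ∈ {L : A → Lab | Admissible df L ∧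
      ∀ i : Fin n, LabCompatible L (Ls i)} → M' ∈ {L : A → Lab | Admissible df L ∧
      ∀ i : Fin n, LabCompatible L (Ls i)} →
      ((if c i then hamSetPref (Ls i) else iuoSetPref (Ls i)) M M' ↔ hamSetPref (Ls i) M M') := by
    intro i M M' hM hM'
    by_cases hc : c i
    · simp [hc]
    · simp only [hc, if_false]
      exact (compat_pref_iff (hM'.2 i) (hM.2 i)).symm
  obtain ⟨hall, j, hstr⟩ := hdom
  refine ⟨fun i => (iff_i i L' L hL' hL).mp (hall i), j, ?_, ?_⟩
  · exact (iff_i j L' L hL' hL).mp hstr.1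
  · intro hba; exact hstr.2 ((iff_i j L L' hL hL').mpr hba)
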